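/- Let A, B ⊂ B(H) be C*-algebras with A ⊆_γ B. Suppose A has the local distance property LD_k on H, i.e. d(x, A′) ≤ k‖ad(x)|_A‖ for all x ∈ B(H), where A′ is the commutant of A. Then B′ ⊆_{2kγ} A′, i.e., every x in the unit ball of the commutant of B is within 2kγ of an element of the commutant of A. -/

import Mathlib

/-- The near inclusion `A ⊆_γ B`: every element of the closed unit ball of `A` lies within
distance `γ` of some element of `B`. -/
def nearIncl {E : Type*} [NormedRing E] (A B : Set E) (γ : ℝ) : Prop :=
  ∀ x ∈ A, ‖x‖ ≤ 1 → ∃ y ∈ B, ‖x - y‖ ≤ γ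

/-- The Kadison–Kastler distance between two subsets of a C*-algebra: the infimum of all
`γ > 0` such that each element of the unit ball of either set is within `γ` of an element
of the unit ball of the other. -/
noncomputable def kkDist {E : Type*} [NormedRing E] (A B : Set E) : ℝ :=
  sInf {γ : ℝ | 0 < γ ∧
    (∀ x ∈ A, ‖x‖ ≤ 1 → ∃ y ∈ B, ‖y‖ ≤ 1 ∧ ‖x - y‖ < γ) ∧
    (∀ y ∈ B, ‖y‖ ≤ 1 → ∃ x ∈ A, ‖x‖ ≤ 1 ∧ ‖y - x‖ < γ)}

/-- The commutant of a set of bounded operators on a Hilbert space. -/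
noncomputable def commutant {H : Type*} [NormedAddCommGroup H] [InnerProductSpace ℂ H]
    [CompleteSpace H] (S : Set (H →L[ℂ] H)) : Set (H →L[ℂ] H) :=
  {x | ∀ a ∈ S, a * x = x * a}

/-- `adNorm S x` is `‖ad(x)|_S‖`, the norm of the derivation `a ↦ xa - ax` restricted to `S`. -/
noncomputable def adNorm {H : Type*} [NormedAddCommGroup H] [InnerProductSpace ℂ H]
    [CompleteSpace H] (S : Set (H →L[ℂ] H)) (x : H →L[ℂ] H) : ℝ :=
  sSup {r : ℝ | ∃ a ∈ S, ‖a‖ ≤ 1 ∧ r = ‖x * a - a * x‖}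

variable {H : Type*} [NormedAddCommGroup H] [InnerProductSpace ℂ H] [CompleteSpace H]

/-!
For `x` in the unit ball of `B′` and `a` in the unit ball of `A`, choose `b ∈ B` with
`‖a - b‖ ≤ γ`; since `x` commutes with `b`, `‖xa - ax‖ = ‖x(a - b) - (a - b)x‖ ≤ 2γ`. Hence
`‖ad(x)|_A‖ ≤ 2γ`, and `LD_k` gives `d(x, A′) ≤ 2kγ`. This distance is attained: `A′` is closed
in the weak operator topology, in which norm-closed balls of `B(H)` are compact (a WOT limit
along an ultrafilter is the operator representing the limit of the sesquilinear forms
`⟪T ξ, η⟫`) and the norm is lower semicontinuous.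
-/

open Filter Metric Topology InnerProductSpace

namespace ContinuousLinearMap

variable {𝕜 E F : Type*} [RCLike 𝕜] [NormedAddCommGroup E] [InnerProductSpace 𝕜 E]
  [NormedAddCommGroup F] [InnerProductSpace 𝕜 F]

theorem norm_inner_apply_le (T : E →L[𝕜] F) (x : E) (y : F) :
    ‖⟪T x, y⟫_𝕜‖ ≤ ‖T‖ * ‖x‖ * ‖y‖ :=
  (norm_inner_le_norm _ _).trans (by gcongr; exact T.le_opNorm x)

theorem opNorm_le_iff_norm_inner_le {T : E →L[𝕜] F} {C : ℝ} (hC : 0 ≤ C) :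
    ‖T‖ ≤ C ↔ ∀ x y, ‖⟪T x, y⟫_𝕜‖ ≤ C * ‖x‖ * ‖y‖ := by
  refine ⟨fun hT x y => (T.norm_inner_apply_le x y).trans (by gcongr),
    fun h => opNorm_le_of_re_inner_le hC fun x y hx hy => ?_⟩
  simpa [hx, hy] using (RCLike.re_le_norm _).trans (h x y)

end ContinuousLinearMap

namespace ContinuousLinearMapWOT

variable {𝕜 E : Type*} [RCLike 𝕜] [NormedAddCommGroup E] [InnerProductSpace 𝕜 E]
  [CompleteSpace E]

theorem isClosed_toCLM_preimage_closedBall (x : E →L[𝕜] E) (r : ℝ) :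
    IsClosed (toCLM ⁻¹' closedBall x r : Set (E →WOT[𝕜] E)) := by
  rcases lt_or_ge r 0 with hr | hr
  · simp [closedBall_eq_empty.2 hr]
  have hball : toCLM ⁻¹' closedBall x r =
      ⋂ (ξ : E) (η : E), {T : E →WOT[𝕜] E | ‖⟪η, T ξ⟫_𝕜 - ⟪η, x ξ⟫_𝕜‖ ≤ r * ‖ξ‖ * ‖η‖} := by
    ext T
    simp [dist_eq_norm, ContinuousLinearMap.opNorm_le_iff_norm_inner_le hr, ← inner_sub_right,
      norm_inner_symm]
  rw [hball]
  refine isClosed_iInter fun ξ => isClosed_iInter fun η => isClosed_le ?_ continuous_const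
  exact ((continuous_inner_apply continuous_id ξ η).sub continuous_const).norm

theorem exists_le_nhds_of_eventually_norm_le (U : Ultrafilter (E →WOT[𝕜] E)) {M : ℝ}
    (hU : ∀ᶠ T in (U : Filter (E →WOT[𝕜] E)), ‖T.toCLM‖ ≤ M) :
    ∃ S : E →WOT[𝕜] E, ↑U ≤ 𝓝 S := by
  have hbound (v w : E) : ∀ᶠ T in (U : Filter (E →WOT[𝕜] E)), ‖⟪T v, w⟫_𝕜‖ ≤ M * ‖v‖ * ‖w‖ :=
    hU.mono fun T hT => (T.toCLM.norm_inner_apply_le v w).trans (by gcongr)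
  have hlim (v w : E) : ∃ L : 𝕜, Tendsto (fun T : E →WOT[𝕜] E => ⟪T v, w⟫_𝕜) U (𝓝 L) := by
    obtain ⟨L, -, hL⟩ := (isCompact_closedBall (0 : 𝕜) (M * ‖v‖ * ‖w‖)).ultrafilter_le_nhds'
      (U.map _) ((hbound v w).mono fun T hT => by simpa using hT)
    exact ⟨L, hL⟩
  choose L hL using hlim
  let B : E →L⋆[𝕜] E →L[𝕜] 𝕜 := LinearMap.mkContinuous₂
    (LinearMap.mk₂'ₛₗ (starRingEnd 𝕜) (RingHom.id 𝕜) L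
      (fun v v' w => tendsto_nhds_unique (hL _ _) (by
        simpa [inner_add_left] using (hL v w).add (hL v' w)))
      (fun c v w => tendsto_nhds_unique (hL _ _) (by
        simpa [inner_smul_left] using (hL v w).const_mul (starRingEnd 𝕜 c)))
      (fun v w w' => tendsto_nhds_unique (hL _ _) (by
        simpa [inner_add_right] using (hL v w).add (hL v w')))
      (fun c v w => tendsto_nhds_unique (hL _ _) (by
        simpa [inner_smul_right] using (hL v w).const_mul c)))
    M fun v w => le_of_tendsto (hL v w).norm (hbound v w)
  refine ⟨ofCLM (continuousLinearMapOfBilin B),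
    le_nhds_iff_forall_inner_apply_le_nhds.2 fun v w => ?_⟩
  have hconj : Tendsto (fun T : E →WOT[𝕜] E => ⟪w, T v⟫_𝕜) U (𝓝 (starRingEnd 𝕜 (L v w))) := by
    simpa [Function.comp_def] using (RCLike.continuous_conj.tendsto _).comp (hL v w)
  rwa [← inner_conj_symm w, coe_ofCLM, continuousLinearMapOfBilin_apply]

theorem isCompact_toCLM_preimage_closedBall (x : E →L[𝕜] E) (r : ℝ) :
    IsCompact (toCLM ⁻¹' closedBall x r : Set (E →WOT[𝕜] E)) := by
  refine isCompact_iff_ultrafilter_le_nhds'.2 fun U hU => ?_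
  have hbdd : ∀ᶠ T in (U : Filter (E →WOT[𝕜] E)), ‖T.toCLM‖ ≤ ‖x‖ + r :=
    mem_of_superset hU fun T hT => by
      simpa using norm_le_norm_add_const_of_dist_le (mem_closedBall.1 hT)
  obtain ⟨S, hS⟩ := exists_le_nhds_of_eventually_norm_le U hbdd
  exact ⟨S, (isClosed_toCLM_preimage_closedBall x r).mem_of_tendsto hS hU, hS⟩

theorem lowerSemicontinuous_dist_toCLM (x : E →L[𝕜] E) :
    LowerSemicontinuous fun T : E →WOT[𝕜] E => dist x T.toCLM := by
  refine lowerSemicontinuous_iff_isClosed_preimage.2 fun r => ?_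
  simpa [Set.preimage, dist_comm x] using isClosed_toCLM_preimage_closedBall x r

theorem exists_dist_eq_infDist {C : Set (E →L[𝕜] E)}
    (hC : IsClosed (toCLM ⁻¹' C : Set (E →WOT[𝕜] E))) (hne : C.Nonempty) (x : E →L[𝕜] E) :
    ∃ y ∈ C, dist x y = infDist x C := by
  obtain ⟨z, hzC, hz⟩ := (infDist_lt_iff hne).1 (lt_add_one (infDist x C))
  set K : Set (E →WOT[𝕜] E) := toCLM ⁻¹' C ∩ toCLM ⁻¹' closedBall x (infDist x C + 1)
  have hK : IsCompact K := (isCompact_toCLM_preimage_closedBall _ _).inter_left hC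
  have hzK : ofCLM z ∈ K := ⟨hzC, by simpa [dist_comm] using hz.le⟩
  obtain ⟨S, ⟨hSC, -⟩, hmin⟩ :=
    (lowerSemicontinuous_dist_toCLM x).lowerSemicontinuousOn K |>.exists_isMinOn ⟨_, hzK⟩ hK
  refine ⟨S.toCLM, hSC, le_antisymm ((le_infDist hne).2 fun y hy => ?_)
    (infDist_le_dist_of_mem hSC)⟩
  by_cases hxy : dist x y ≤ infDist x C + 1
  · exact hmin (a := ofCLM y) ⟨hy, by simpa [dist_comm] using hxy⟩
  · exact (hmin hzK).trans (hz.trans (not_le.1 hxy)).le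

end ContinuousLinearMapWOT

theorem isClosed_toCLM_preimage_commutant (S : Set (H →L[ℂ] H)) :
    IsClosed (ContinuousLinearMapWOT.toCLM ⁻¹' commutant S : Set (H →WOT[ℂ] H)) := by
  convert Set.isClosed_centralizer (ContinuousLinearMapWOT.ofCLM '' S) using 1
  ext T
  simp only [Set.mem_preimage, commutant, Set.mem_centralizer_iff, Set.forall_mem_image]
  exact forall₂_congr fun a _ => ContinuousLinearMapWOT.toCLM_injective.eq_iff

theorem adNorm_le_of_mem_commutant {A B : Set (H →L[ℂ] H)} {γ : ℝ} (hγ : 0 ≤ γ)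
    (hAB : nearIncl A B γ) {x : H →L[ℂ] H} (hx : x ∈ commutant B) :
    adNorm A x ≤ 2 * γ * ‖x‖ := by
  refine Real.sSup_le ?_ (by positivity)
  rintro r ⟨a, haA, ha, rfl⟩
  obtain ⟨b, hbB, hab⟩ := hAB a haA ha
  have hcomm : x * a - a * x = x * (a - b) - (a - b) * x := by
    rw [mul_sub, sub_mul, hx b hbB]; abel
  calc ‖x * a - a * x‖ = ‖x * (a - b) - (a - b) * x‖ := by rw [hcomm]
    _ ≤ ‖x‖ * ‖a - b‖ + ‖a - b‖ * ‖x‖ :=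
      (norm_sub_le _ _).trans (add_le_add (norm_mul_le _ _) (norm_mul_le _ _))
    _ ≤ 2 * γ * ‖x‖ := by nlinarith [norm_nonneg x]

/-- Proposition 2.5: if `A ⊆_γ B` and `A` has the local distance property `LD_k` on `H`,
then `B' ⊆_{2kγ} A'`. -/
theorem commutant_nearIncl_of_LD (A B : NonUnitalStarSubalgebra ℂ (H →L[ℂ] H)) (γ k : ℝ)
    (hγ : 0 < γ) (hk : 0 < k)
    (hAB : nearIncl (A : Set (H →L[ℂ] H)) (B : Set (H →L[ℂ] H)) γ)
    (hLD : ∀ x : H →L[ℂ] H,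
      Metric.infDist x (commutant (A : Set (H →L[ℂ] H))) ≤ k * adNorm (A : Set (H →L[ℂ] H)) x) :
    nearIncl (commutant (B : Set (H →L[ℂ] H))) (commutant (A : Set (H →L[ℂ] H))) (2 * k * γ) := by
  intro x hxB hx
  obtain ⟨y, hyA, hxy⟩ := ContinuousLinearMapWOT.exists_dist_eq_infDist
    (isClosed_toCLM_preimage_commutant _) ⟨0, fun a _ => by simp⟩ x
  have had : adNorm A x ≤ 2 * γ :=
    (adNorm_le_of_mem_commutant hγ.le hAB hxB).trans (mul_le_of_le_one_right (by positivity) hx)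
  refine ⟨y, hyA, ?_⟩
  calc ‖x - y‖ = infDist x (commutant A) := by rw [← dist_eq_norm, hxy]
    _ ≤ k * adNorm A x := hLD x
    _ ≤ k * (2 * γ) := by gcongr
    _ = 2 * k * γ := by ring
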